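/- arXiv:2507.16513 — 7 statements merged into one kernel-verified Lean document; each statement's English description precedes it below -/
import Mathlib

section
/- Let H be a real Hilbert space, R an operator with domain dom(R) ⊆ H mapping into H, and U ⊆ dom(R). Then SRG_U(I + R) = 1 + SRG_U(R), where (I+R)u := u + Ru and 1 + C := { 1 + z : z ∈ C } for C ⊆ ℂ. -/
open ComplexConjugate
open scoped RealInnerProductSpace Pointwise

/-- The point `(‖Δy‖/‖Δu‖)·e^{iθ}` with `θ = arccos(⟨Δu,Δy⟩/(‖Δu‖‖Δy‖)) ∈ [0,π]`
contributed to the SRG by a pair of increments `Δu`, `Δy` (equal to `0` when `Δy = 0`). -/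
noncomputable def srgPoint {H : Type*} [NormedAddCommGroup H] [InnerProductSpace ℝ H]
    (du dy : H) : ℂ :=
  ((‖dy‖ / ‖du‖ : ℝ) : ℂ) *
    Complex.exp (Complex.I * ((Real.arccos (⟪du, dy⟫ / (‖du‖ * ‖dy‖)) : ℝ) : ℂ))

/-- The Scaled Relative Graph of an operator `R` on a real Hilbert space over a set `U` of
inputs; both signs of the angle are included (via complex conjugation). -/
noncomputable def SRG {H : Type*} [NormedAddCommGroup H] [InnerProductSpace ℝ H]
    (R : H → H) (U : Set H) : Set ℂ :=
  { z | ∃ u₁ ∈ U, ∃ u₂ ∈ U, u₁ ≠ u₂ ∧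
      (z = srgPoint (u₁ - u₂) (R u₁ - R u₂) ∨
        z = conj (srgPoint (u₁ - u₂) (R u₁ - R u₂))) }

/-- The Scaled Graph of an operator `R` at the particular input `us`, over a set `U` of inputs. -/
noncomputable def SG {H : Type*} [NormedAddCommGroup H] [InnerProductSpace ℝ H]
    (R : H → H) (U : Set H) (us : H) : Set ℂ :=
  { z | ∃ u ∈ U, u ≠ us ∧
      (z = srgPoint (u - us) (R u - R us) ∨
        z = conj (srgPoint (u - us) (R u - R us))) }

/-- A set `C ⊆ ℂ` satisfies the chord property if for every `z ∈ C` the segment `[z, z̄]`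
is contained in `C`. -/
def ChordProperty (C : Set ℂ) : Prop :=
  ∀ z ∈ C, ∀ α ∈ Set.Icc (0 : ℝ) 1, (α : ℂ) * z + ((1 - α : ℝ) : ℂ) * conj z ∈ C

/-- The right-hand arc `Arc⁺(z, z̄) = { r e^{i(1−2α)φ} : α ∈ [0,1] }`, where `z = r e^{iφ}`
with `φ = arg z ∈ (−π, π]`. -/
noncomputable def arcPlus (z : ℂ) : Set ℂ :=
  { w | ∃ α ∈ Set.Icc (0 : ℝ) 1,
      w = ((‖z‖ : ℝ) : ℂ) *
        Complex.exp (Complex.I * (((1 - 2 * α) * Complex.arg z : ℝ) : ℂ)) }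

/-- The left-hand arc `Arc⁻(z, z̄) = −Arc⁺(−z, −z̄)`. -/
noncomputable def arcMinus (z : ℂ) : Set ℂ := (fun w => -w) '' arcPlus (-z)

/-- `C` satisfies the right-arc property if `Arc⁺(z,z̄) ⊆ C` for all `z ∈ C`. -/
def RightArcProperty (C : Set ℂ) : Prop := ∀ z ∈ C, arcPlus z ⊆ C

/-- `C` satisfies the left-arc property if `Arc⁻(z,z̄) ⊆ C` for all `z ∈ C`. -/
def LeftArcProperty (C : Set ℂ) : Prop := ∀ z ∈ C, arcMinus z ⊆ C

/-- `C` satisfies an arc property if it satisfies the left-arc or the right-arc property. -/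
def ArcProperty (C : Set ℂ) : Prop := LeftArcProperty C ∨ RightArcProperty C

/-!
With `Δu = u₁ - u₂` and `Δy = R u₁ - R u₂`, the SRG point is the complex number with real part
`⟪Δu, Δy⟫ / ‖Δu‖²` and nonnegative imaginary part `√(‖Δu‖²‖Δy‖² - ⟪Δu, Δy⟫²) / ‖Δu‖²`.
Replacing `Δy` by `Δu + Δy` adds `1` to the real part and leaves the imaginary part unchanged
(the Gram determinant is invariant under this shear), and `z ↦ 1 + z` commutes with conjugation.
-/

section SRG

variable {H : Type*} [NormedAddCommGroup H] [InnerProductSpace ℝ H]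

theorem srgPoint_eq (du dy : H) :
    srgPoint du dy = ((⟪du, dy⟫ / ‖du‖ ^ 2 : ℝ) : ℂ) +
      ((√(‖du‖ ^ 2 * ‖dy‖ ^ 2 - ⟪du, dy⟫ ^ 2) / ‖du‖ ^ 2 : ℝ) : ℂ) * Complex.I := by
  rcases eq_or_ne du 0 with rfl | hdu
  · simp [srgPoint]
  rcases eq_or_ne dy 0 with rfl | hdy
  · simp [srgPoint]
  have hab : 0 < ‖du‖ * ‖dy‖ := mul_pos (norm_pos_iff.mpr hdu) (norm_pos_iff.mpr hdy)
  obtain ⟨hcos₁, hcos₂⟩ := abs_le.mp (abs_real_inner_div_norm_mul_norm_le_one du dy)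
  have hsin : √(1 - (⟪du, dy⟫ / (‖du‖ * ‖dy‖)) ^ 2)
      = √(‖du‖ ^ 2 * ‖dy‖ ^ 2 - ⟪du, dy⟫ ^ 2) / (‖du‖ * ‖dy‖) := by
    rw [div_pow, one_sub_div (by positivity), Real.sqrt_div' _ (by positivity),
      Real.sqrt_sq hab.le, mul_pow]
  rw [srgPoint, mul_comm Complex.I, Complex.exp_mul_I, ← Complex.ofReal_cos,
    ← Complex.ofReal_sin, Real.cos_arccos hcos₁ hcos₂, Real.sin_arccos, hsin]
  have ha : (‖du‖ : ℂ) ≠ 0 := by exact_mod_cast (norm_pos_iff.mpr hdu).ne'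
  have hb : (‖dy‖ : ℂ) ≠ 0 := by exact_mod_cast (norm_pos_iff.mpr hdy).ne'
  push_cast
  field_simp

theorem srgPoint_add_self_left {du : H} (hdu : du ≠ 0) (dy : H) :
    srgPoint du (du + dy) = 1 + srgPoint du dy := by
  have hgram : ‖du‖ ^ 2 * ‖du + dy‖ ^ 2 - ⟪du, du + dy⟫ ^ 2
      = ‖du‖ ^ 2 * ‖dy‖ ^ 2 - ⟪du, dy⟫ ^ 2 := by
    rw [norm_add_sq_real, inner_add_right, real_inner_self_eq_norm_sq]
    ring
  have hre : ⟪du, du + dy⟫ / ‖du‖ ^ 2 = 1 + ⟪du, dy⟫ / ‖du‖ ^ 2 := by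
    have : ‖du‖ ^ 2 ≠ 0 := by positivity
    rw [inner_add_right, real_inner_self_eq_norm_sq, add_div, div_self this]
  rw [srgPoint_eq, srgPoint_eq, hgram, hre]
  push_cast
  ring

theorem SRG_eq_image_of_srgPoint {S R : H → H} {U : Set H} {f : ℂ → ℂ}
    (hf : ∀ z, f (conj z) = conj (f z))
    (h : ∀ u₁ ∈ U, ∀ u₂ ∈ U, u₁ ≠ u₂ →
      srgPoint (u₁ - u₂) (S u₁ - S u₂) = f (srgPoint (u₁ - u₂) (R u₁ - R u₂))) :
    SRG S U = f '' SRG R U := by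
  ext z
  simp only [SRG, Set.mem_ofPred_eq, Set.mem_image]
  constructor
  · rintro ⟨u₁, h₁, u₂, h₂, hne, rfl | rfl⟩
    · exact ⟨_, ⟨u₁, h₁, u₂, h₂, hne, .inl rfl⟩, (h u₁ h₁ u₂ h₂ hne).symm⟩
    · exact ⟨_, ⟨u₁, h₁, u₂, h₂, hne, .inr rfl⟩, by rw [hf, h u₁ h₁ u₂ h₂ hne]⟩
  · rintro ⟨w, ⟨u₁, h₁, u₂, h₂, hne, rfl | rfl⟩, rfl⟩
    · exact ⟨u₁, h₁, u₂, h₂, hne, .inl (h u₁ h₁ u₂ h₂ hne).symm⟩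
    · exact ⟨u₁, h₁, u₂, h₂, hne, .inr (by rw [hf, h u₁ h₁ u₂ h₂ hne])⟩

end SRG

/-- for an operator `R` on a real Hilbert space `H` and `U ⊆ H`,
`SRG_U(I + R) = 1 + SRG_U(R)`. -/
theorem stmt4 {H : Type*} [NormedAddCommGroup H] [InnerProductSpace ℝ H]
    (R : H → H) (U : Set H) :
    SRG (fun u => u + R u) U = (fun z => 1 + z) '' SRG R U := by
  refine SRG_eq_image_of_srgPoint (fun z => by rw [map_add, map_one]) ?_
  intro u₁ _ u₂ _ hne
  rw [add_sub_add_comm, srgPoint_add_self_left (sub_ne_zero.mpr hne)]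
end

section
/- Let H be a real Hilbert space, R an injective operator with domain dom(R) ⊆ H mapping into H, and U ⊆ dom(R). Then the scaled relative graph of the inverse operator R⁻¹ : R(dom(R)) → dom(R) over the image set R(U) is the image of SRG_U(R) under the Möbius inversion re^{iφ} ↦ (1/r)e^{iφ}: SRG_{R(U)}(R⁻¹) = { z/|z|² : z ∈ SRG_U(R) }. -/
open ComplexConjugate
open scoped RealInnerProductSpace Pointwise

/-! Exchanging the roles of input and output increments leaves the angle `θ` unchanged and
inverts the ratio `‖Δy‖/‖Δu‖`, so each SRG point `z` of `R` becomes `1 / z̄ = z / |z|²` for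
`R⁻¹`; injectivity of `R` makes the pairs of distinct points of `R(U)` exactly the images of
pairs of distinct points of `U`. -/

theorem Complex.div_normSq_eq_inv_conj (z : ℂ) :
    z / ((Complex.normSq z : ℝ) : ℂ) = (conj z)⁻¹ := by
  rw [Complex.inv_def, Complex.conj_conj, Complex.normSq_conj, Complex.ofReal_inv, div_eq_mul_inv]

theorem srgPoint_swap {H : Type*} [NormedAddCommGroup H] [InnerProductSpace ℝ H] (du dy : H) :
    srgPoint dy du = (conj (srgPoint du dy))⁻¹ := by
  unfold srgPoint
  rw [real_inner_comm, mul_comm ‖dy‖, map_mul, Complex.conj_ofReal, ← Complex.exp_conj, mul_inv,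
    ← Complex.exp_neg, map_mul, Complex.conj_I, Complex.conj_ofReal, ← Complex.ofReal_inv, inv_div]
  ring_nf

/-- for an injective operator `R` on a real Hilbert space `H` (with inverse `g`,
i.e. `g (R u) = u` for all `u`, so that `g` agrees with `R⁻¹ : R(dom R) → dom R` on the range of
`R`) and `U ⊆ H`, the SRG of the inverse over `R(U)` is the image of `SRG_U(R)` under the Möbius
inversion `z ↦ z/|z|²` (i.e. `re^{iφ} ↦ (1/r)e^{iφ}`). -/
theorem stmt5 {H : Type*} [NormedAddCommGroup H] [InnerProductSpace ℝ H]
    (R : H → H) (hR : Function.Injective R) (g : H → H) (hg : ∀ u, g (R u) = u) (U : Set H) :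
    SRG g (R '' U) = (fun z => z / ((Complex.normSq z : ℝ) : ℂ)) '' SRG R U := by
  simp only [Complex.div_normSq_eq_inv_conj]
  ext z
  constructor
  · rintro ⟨_, ⟨u₁, hu₁, rfl⟩, _, ⟨u₂, hu₂, rfl⟩, hne, hz⟩
    have hu : u₁ ≠ u₂ := ne_of_apply_ne R hne
    rw [hg, hg, srgPoint_swap] at hz
    rcases hz with rfl | rfl
    · exact ⟨_, ⟨u₁, hu₁, u₂, hu₂, hu, .inl rfl⟩, rfl⟩
    · exact ⟨_, ⟨u₁, hu₁, u₂, hu₂, hu, .inr rfl⟩, by simp only [Complex.conj_conj, map_inv₀]⟩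
  · rintro ⟨w, ⟨u₁, hu₁, u₂, hu₂, hu, hw⟩, rfl⟩
    refine ⟨R u₁, ⟨u₁, hu₁, rfl⟩, R u₂, ⟨u₂, hu₂, rfl⟩, hR.ne hu, ?_⟩
    rw [hg, hg, srgPoint_swap]
    rcases hw with rfl | rfl
    · exact .inl rfl
    · exact .inr (by simp only [Complex.conj_conj, map_inv₀])
end

section
/- Let H be a real Hilbert space, U ⊆ H a set containing at least two points, and R, S operators defined on U mapping into H. If at least one of SRG_U(R), SRG_U(S) satisfies the chord property, then SRG_U(R + S) ⊆ SRG_U(R) + SRG_U(S), where R+S is the pointwise sum (R+S)u := Ru + Su and the right-hand side is the Minkowski sum of subsets of ℂ. -/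
open ComplexConjugate
open scoped RealInnerProductSpace Pointwise

/-! For a fixed input increment `du`, the SRG point of an output increment `y` is
`⟪du, y⟫/‖du‖² + i‖P y‖/‖du‖`, where `P` is the orthogonal projection onto `du`ᗮ: its real part
is linear in `y` and its imaginary part is a seminorm in `y`. So the point of `y + y'` is the
point of `y'` plus a point with the real part of the point `z` of `y` and an imaginary part of
absolute value at most `z.im`, i.e. a point of the chord `[z, z̄]`. -/

open InnerProductGeometry

namespace ChordProperty

theorem mk_re_mem {C : Set ℂ} (hC : ChordProperty C) {z : ℂ} (hz : z ∈ C) {t : ℝ}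
    (ht : |t| ≤ z.im) : (⟨z.re, t⟩ : ℂ) ∈ C := by
  rcases (abs_nonneg t |>.trans ht).eq_or_lt with him | him
  · have ht0 : t = 0 := abs_nonpos_iff.mp (him ▸ ht)
    convert hz using 1
    exact Complex.ext rfl (by rw [ht0, him])
  · have hα : (t + z.im) / (2 * z.im) ∈ Set.Icc (0 : ℝ) 1 := by
      obtain ⟨hlo, hhi⟩ := abs_le.mp ht
      constructor
      · exact div_nonneg (by linarith) (by linarith)
      · rw [div_le_one (by linarith)]; linarith
    convert hC z hz _ hα using 1
    apply Complex.ext <;>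
      simp only [Complex.add_re, Complex.add_im, Complex.re_ofReal_mul, Complex.im_ofReal_mul,
        Complex.conj_re, Complex.conj_im] <;>
      field_simp <;> ring

end ChordProperty

section srgPoint

variable {H : Type*} [NormedAddCommGroup H] [InnerProductSpace ℝ H]

theorem srgPoint_eq_mul_exp_angle (du y : H) :
    srgPoint du y = ((‖y‖ / ‖du‖ : ℝ) : ℂ) * Complex.exp (Complex.I * (angle du y : ℂ)) :=
  rfl

theorem srgPoint_re (du y : H) : (srgPoint du y).re = ⟪du, y⟫ / ‖du‖ ^ 2 := by
  rcases eq_or_ne du 0 with rfl | hdu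
  · simp [srgPoint]
  have hdu' : ‖du‖ ≠ 0 := norm_ne_zero_iff.mpr hdu
  rw [srgPoint_eq_mul_exp_angle, mul_comm Complex.I, Complex.re_ofReal_mul,
    Complex.exp_ofReal_mul_I_re, ← cos_angle_mul_norm_mul_norm du y]
  field_simp

theorem sq_norm_mul_sq_norm_starProjection_orthogonal_singleton (du y : H) :
    ‖du‖ ^ 2 * ‖(ℝ ∙ du)ᗮ.starProjection y‖ ^ 2 = ‖du‖ ^ 2 * ‖y‖ ^ 2 - ⟪du, y⟫ ^ 2 := by
  rcases eq_or_ne du 0 with rfl | hdu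
  · simp
  have hdu' : ‖du‖ ≠ 0 := norm_ne_zero_iff.mpr hdu
  have hproj : ‖du‖ ^ 2 * ‖(ℝ ∙ du).starProjection y‖ ^ 2 = ⟪du, y⟫ ^ 2 := by
    rw [Submodule.starProjection_singleton, norm_smul, Real.norm_eq_abs, mul_pow, sq_abs,
      RCLike.ofReal_real_eq_id, id]
    field_simp
  linear_combination -‖du‖ ^ 2 * Submodule.norm_sq_eq_add_norm_sq_starProjection y (ℝ ∙ du) - hproj

theorem srgPoint_im (du y : H) :
    (srgPoint du y).im = ‖(ℝ ∙ du)ᗮ.starProjection y‖ / ‖du‖ := by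
  rcases eq_or_ne du 0 with rfl | hdu
  · simp [srgPoint]
  have hdu' : ‖du‖ ≠ 0 := norm_ne_zero_iff.mpr hdu
  have hsin : Real.sin (angle du y) * (‖du‖ * ‖y‖) = ‖du‖ * ‖(ℝ ∙ du)ᗮ.starProjection y‖ := by
    rw [sin_angle_mul_norm_mul_norm, real_inner_self_eq_norm_sq, real_inner_self_eq_norm_sq,
      ← sq, ← sq_norm_mul_sq_norm_starProjection_orthogonal_singleton, ← mul_pow,
      Real.sqrt_sq (by positivity)]
  rw [srgPoint_eq_mul_exp_angle, mul_comm Complex.I, Complex.im_ofReal_mul,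
    Complex.exp_ofReal_mul_I_im]
  field_simp
  apply mul_left_cancel₀ hdu'
  linear_combination hsin

theorem exists_srgPoint_add_eq (du y y' : H) :
    ∃ t : ℝ, |t| ≤ (srgPoint du y).im ∧
      srgPoint du (y + y') = ⟨(srgPoint du y).re, t⟩ + srgPoint du y' := by
  refine ⟨(srgPoint du (y + y')).im - (srgPoint du y').im, ?_, Complex.ext ?_ ?_⟩
  · rw [srgPoint_im, srgPoint_im, srgPoint_im, ← sub_div, abs_div, abs_norm]
    gcongr
    simpa only [map_add, add_sub_cancel_right] using
      abs_norm_sub_norm_le ((ℝ ∙ du)ᗮ.starProjection (y + y')) ((ℝ ∙ du)ᗮ.starProjection y')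
  · simp only [Complex.add_re, srgPoint_re, inner_add_right, add_div]
  · simp only [Complex.add_im, sub_add_cancel]

theorem SRG_add_subset_add_of_chordProperty_left {R S : H → H} {U : Set H}
    (hR : ChordProperty (SRG R U)) : SRG (fun u => R u + S u) U ⊆ SRG R U + SRG S U := by
  rintro z ⟨u₁, hu₁, u₂, hu₂, hne, hz⟩
  obtain ⟨t, ht, hsplit⟩ := exists_srgPoint_add_eq (u₁ - u₂) (R u₁ - R u₂) (S u₁ - S u₂)
  have hzR : srgPoint (u₁ - u₂) (R u₁ - R u₂) ∈ SRG R U := ⟨u₁, hu₁, u₂, hu₂, hne, .inl rfl⟩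
  rw [add_sub_add_comm, hsplit] at hz
  rcases hz with rfl | rfl
  · exact Set.add_mem_add (hR.mk_re_mem hzR ht) ⟨u₁, hu₁, u₂, hu₂, hne, .inl rfl⟩
  · rw [map_add]
    refine Set.add_mem_add ?_ ⟨u₁, hu₁, u₂, hu₂, hne, .inr rfl⟩
    exact hR.mk_re_mem hzR (t := -t) (by rwa [abs_neg])

end srgPoint

theorem stmt6_general {H : Type*} [NormedAddCommGroup H] [InnerProductSpace ℝ H]
    (R S : H → H) (U : Set H)
    (hc : ChordProperty (SRG R U) ∨ ChordProperty (SRG S U)) :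
    SRG (fun u => R u + S u) U ⊆ SRG R U + SRG S U := by
  rcases hc with hR | hS
  · exact SRG_add_subset_add_of_chordProperty_left hR
  · simpa only [add_comm] using SRG_add_subset_add_of_chordProperty_left (S := R) hS

/-- if `U` contains at least two points and at least one of `SRG_U(R)`,
`SRG_U(S)` satisfies the chord property, then `SRG_U(R+S) ⊆ SRG_U(R) + SRG_U(S)`
(Minkowski sum). -/
theorem stmt6 {H : Type*} [NormedAddCommGroup H] [InnerProductSpace ℝ H]
    (R S : H → H) (U : Set H) (hU : ∃ u ∈ U, ∃ v ∈ U, u ≠ v)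
    (hc : ChordProperty (SRG R U) ∨ ChordProperty (SRG S U)) :
    SRG (fun u => R u + S u) U ⊆ SRG R U + SRG S U :=
  stmt6_general R S U hc
end

section
/- Let H be a real Hilbert space, R an injective operator with domain dom(R) ⊆ H mapping into H, U ⊆ dom(R), u⋆ ∈ dom(R), and y⋆ := Ru⋆. Then the scaled graph of R⁻¹ at y⋆ over R(U) is the image of the scaled graph of R at u⋆ over U under the Möbius inversion re^{iφ} ↦ (1/r)e^{iφ}: SG_{R(U),y⋆}(R⁻¹) = { z/|z|² : z ∈ SG_{U,u⋆}(R) }. -/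
open ComplexConjugate
open scoped RealInnerProductSpace Pointwise

/-! Since `g` is a left inverse of `R`, the increments of `g` at `R u` are those of `R` at `u`
with input and output swapped. Swapping keeps the cosine `⟪Δu, Δy⟫ / (‖Δu‖ ‖Δy‖)`, hence the
angle, and inverts the gain `‖Δy‖ / ‖Δu‖`: this is the inversion `z ↦ z / |z|²`. -/

noncomputable abbrev inversion (z : ℂ) : ℂ := z / ((Complex.normSq z : ℝ) : ℂ)

lemma conj_inversion (z : ℂ) : conj (inversion z) = inversion (conj z) := by
  rw [inversion, inversion, map_div₀, Complex.conj_ofReal, Complex.normSq_conj]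

section srgPoint

variable {H : Type*} [NormedAddCommGroup H] [InnerProductSpace ℝ H]

lemma srgPoint_swap_s8 {du dy : H} (hdu : du ≠ 0) (hdy : dy ≠ 0) :
    srgPoint dy du = inversion (srgPoint du dy) := by
  have hdu' : (‖du‖ : ℂ) ≠ 0 := by exact_mod_cast norm_ne_zero_iff.mpr hdu
  have hdy' : (‖dy‖ : ℂ) ≠ 0 := by exact_mod_cast norm_ne_zero_iff.mpr hdy
  have hnormSq : Complex.normSq (srgPoint du dy) = (‖dy‖ / ‖du‖) ^ 2 := by
    rw [srgPoint, ← Complex.sq_norm, norm_mul, mul_comm Complex.I,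
      Complex.norm_exp_ofReal_mul_I, mul_one, Complex.norm_real,
      Real.norm_of_nonneg (by positivity)]
  rw [inversion, hnormSq, srgPoint, srgPoint, real_inner_comm, mul_comm ‖dy‖]
  push_cast
  field_simp

lemma inversion_image_srgPoint_pair {du dy : H} (hdu : du ≠ 0) (hdy : dy ≠ 0) :
    inversion '' {srgPoint du dy, conj (srgPoint du dy)} =
      {srgPoint dy du, conj (srgPoint dy du)} := by
  rw [Set.image_pair, ← conj_inversion, ← srgPoint_swap_s8 hdu hdy]

lemma SG_eq_biUnion (R : H → H) (U : Set H) (us : H) :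
    SG R U us = ⋃ u ∈ U \ {us},
      {srgPoint (u - us) (R u - R us), conj (srgPoint (u - us) (R u - R us))} := by
  ext z
  simp only [SG, Set.mem_ofPred_eq, Set.mem_iUnion, Set.mem_sdiff, Set.mem_singleton_iff,
    Set.mem_insert_iff, exists_prop, and_assoc]

end srgPoint

theorem stmt8_general {H : Type*} [NormedAddCommGroup H] [InnerProductSpace ℝ H]
    (R : H → H) (g : H → H) (hg : ∀ u, g (R u) = u)
    (U : Set H) (us : H) :
    SG g (R '' U) (R us) = (fun z => z / ((Complex.normSq z : ℝ) : ℂ)) '' SG R U us := by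
  have hR : Function.Injective R := Function.LeftInverse.injective hg
  rw [SG_eq_biUnion, SG_eq_biUnion, ← Set.image_singleton, ← Set.image_sdiff hR,
    Set.biUnion_image, Set.image_iUnion₂]
  refine Set.iUnion₂_congr fun u hu => ?_
  rw [hg, hg,
    inversion_image_srgPoint_pair (sub_ne_zero.mpr hu.2) (sub_ne_zero.mpr (hR.ne hu.2))]

/-- for an injective operator `R` (with inverse `g`, i.e. `g (R u) = u` for all
`u`), `U ⊆ H`, `u⋆ ∈ H` and `y⋆ = R u⋆`, the scaled graph of `R⁻¹` at `y⋆` over `R(U)` is the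
image of `SG_{U,u⋆}(R)` under the Möbius inversion `z ↦ z/|z|²`. -/
theorem stmt8 {H : Type*} [NormedAddCommGroup H] [InnerProductSpace ℝ H]
    (R : H → H) (hR : Function.Injective R) (g : H → H) (hg : ∀ u, g (R u) = u)
    (U : Set H) (us : H) :
    SG g (R '' U) (R us) = (fun z => z / ((Complex.normSq z : ℝ) : ℂ)) '' SG R U us :=
  stmt8_general R g hg U us
end

section
/- Let H be a real Hilbert space, u⋆ ∈ H, U ⊆ H nonempty with u⋆ ∉ U, R an operator defined on U ∪ {u⋆} mapping into H, Y ⊆ H with R(U) ⊆ Y and Y ∖ {Ru⋆} nonempty, y⋆ := Ru⋆, and T an operator defined on Y ∪ {y⋆} mapping into H. If at least one of SG_{U,u⋆}(R), SG_{Y,y⋆}(T) satisfies an arc property (left-arc or right-arc), then SG_{U,u⋆}(T ∘ R) ⊆ SG_{Y,y⋆}(T) · SG_{U,u⋆}(R), where the right-hand side is the Minkowski product of subsets of ℂ. -/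
open ComplexConjugate
open scoped RealInnerProductSpace Pointwise

/-!
Write `Δu = u - u⋆`, `Δy = Ru - Ru⋆`, `Δz = TRu - TRu⋆` and let `θ₁ = ∠(Δu, Δy)`,
`θ₂ = ∠(Δy, Δz)`, `θ₃ = ∠(Δu, Δz)`. The point of `SG(T ∘ R)` is
`(‖Δz‖/‖Δy‖)(‖Δy‖/‖Δu‖) e^{iθ₃}`, and the angles satisfy the spherical triangle inequalities
`|θ₁ - θ₂| ≤ θ₃ ≤ min (θ₁ + θ₂) (2π - θ₁ - θ₂)`. If `SG(R)` has the right-arc property it contains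
`(‖Δy‖/‖Δu‖) e^{i(θ₃ - θ₂)}`, which pairs with `(‖Δz‖/‖Δy‖) e^{iθ₂} ∈ SG(T)`; with the left-arc
property it contains `(‖Δy‖/‖Δu‖) e^{i(θ₃ + θ₂)}`, which pairs with the conjugate
`(‖Δz‖/‖Δy‖) e^{-iθ₂}`. The case where `SG(T)` has an arc property is symmetric.
-/

open Complex InnerProductGeometry
open scoped Real

namespace Complex

lemma abs_arg_neg {z : ℂ} (hz : z ≠ 0) : |arg (-z)| = π - |arg z| := by
  rcases lt_trichotomy z.im 0 with him | him | him
  · have hneg : arg z < 0 := arg_neg_iff.2 him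
    rw [arg_neg_eq_arg_add_pi_of_im_neg him, abs_of_neg hneg,
      abs_of_nonneg (by linarith [neg_pi_lt_arg z])]
    ring
  · have hre : z.re ≠ 0 := fun hre => hz (Complex.ext hre him)
    rw [← re_add_im z, him, ofReal_zero, zero_mul, add_zero, ← ofReal_neg]
    rcases hre.lt_or_gt with hre | hre
    · rw [arg_ofReal_of_neg hre, arg_ofReal_of_nonneg (by linarith)]
      simp [abs_of_pos Real.pi_pos]
    · rw [arg_ofReal_of_nonneg hre.le, arg_ofReal_of_neg (by linarith)]
      simp [Real.pi_nonneg]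
  · have hpos : 0 < arg z := (arg_nonneg_iff.2 him.le).lt_of_ne
      (fun h => him.ne' (arg_eq_zero_iff.1 h.symm).2)
    rw [arg_neg_eq_arg_sub_pi_of_im_pos him, abs_of_pos hpos,
      abs_of_nonpos (by linarith [arg_le_pi z])]
    ring

lemma norm_mul_exp_mem_arcPlus {z : ℂ} {ψ : ℝ} (h : |ψ| ≤ |arg z|) :
    (‖z‖ : ℂ) * exp (I * ψ) ∈ arcPlus z := by
  have hq : |ψ / arg z| ≤ 1 := by
    rw [abs_div]; exact div_le_one_of_le₀ h (abs_nonneg _)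
  refine ⟨(1 - ψ / arg z) / 2, ⟨by linarith [(abs_le.1 hq).2], by linarith [(abs_le.1 hq).1]⟩, ?_⟩
  have hψ : (1 - 2 * ((1 - ψ / arg z) / 2)) * arg z = ψ := by
    rcases eq_or_ne (arg z) 0 with h0 | h0
    · rw [h0, abs_zero, abs_nonpos_iff] at h
      simp [h0, h]
    · field_simp; ring
  rw [hψ]

lemma norm_mul_exp_mem_arcMinus {z : ℂ} (hz : z ≠ 0) {φ : ℝ} (h : |φ - π| ≤ π - |arg z|) :
    (‖z‖ : ℂ) * exp (I * φ) ∈ arcMinus z := by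
  refine ⟨(‖-z‖ : ℂ) * exp (I * (φ - π : ℝ)),
    norm_mul_exp_mem_arcPlus (by rwa [abs_arg_neg hz]), ?_⟩
  rw [norm_neg, ofReal_sub, mul_sub, exp_sub, mul_comm I (π : ℂ), exp_pi_mul_I]
  ring

lemma norm_ofReal_mul_exp {r : ℝ} (hr : 0 ≤ r) (t : ℝ) : ‖(r : ℂ) * exp (I * t)‖ = r := by
  rw [norm_mul, norm_real, Real.norm_of_nonneg hr, mul_comm I, norm_exp_ofReal_mul_I, mul_one]

lemma arg_ofReal_mul_exp {r θ : ℝ} (hr : 0 < r) (hθ : θ ∈ Set.Ioc (-π) π) :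
    arg ((r : ℂ) * exp (I * θ)) = θ := by
  rw [arg_real_mul _ hr, mul_comm I, exp_mul_I, arg_cos_add_sin_mul_I hθ]

lemma ofReal_mul_exp_mul_ofReal_mul_exp (a b s t : ℝ) :
    (a : ℂ) * exp (I * s) * ((b : ℂ) * exp (I * t)) = ((a * b : ℝ) : ℂ) * exp (I * (s + t : ℝ)) := by
  push_cast
  rw [mul_add, exp_add]
  ring

lemma conj_ofReal_mul_exp (r t : ℝ) :
    conj ((r : ℂ) * exp (I * t)) = (r : ℂ) * exp (I * (-t : ℝ)) := by
  rw [map_mul, ← exp_conj, conj_ofReal, map_mul, conj_I, conj_ofReal, ofReal_neg]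
  ring_nf

end Complex

lemma ArcProperty.ofReal_mul_exp_mem_mul {A B : Set ℂ} (hA : ArcProperty A)
    (hB : ∀ w ∈ B, conj w ∈ B) {a b θ₁ θ₂ θ₃ : ℝ} (hb : 0 ≤ b) (hθ₁ : θ₁ ∈ Set.Icc 0 π)
    (hbA : (b : ℂ) * exp (I * θ₁) ∈ A) (haB : (a : ℂ) * exp (I * θ₂) ∈ B)
    (h₃ : θ₃ ≤ θ₁ + θ₂) (h₁ : θ₁ ≤ θ₂ + θ₃) (h₂ : θ₂ ≤ θ₃ + θ₁) (hsum : θ₁ + θ₂ + θ₃ ≤ 2 * π) :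
    ((a * b : ℝ) : ℂ) * exp (I * θ₃) ∈ B * A := by
  have factor : ∀ s t : ℝ, s + t = θ₃ → (a : ℂ) * exp (I * s) ∈ B → (b : ℂ) * exp (I * t) ∈ A →
      ((a * b : ℝ) : ℂ) * exp (I * θ₃) ∈ B * A := by
    rintro s t rfl hsB htA
    rw [← ofReal_mul_exp_mul_ofReal_mul_exp]
    exact Set.mul_mem_mul hsB htA
  rcases hb.eq_or_lt with rfl | hb
  · exact factor θ₂ (θ₃ - θ₂) (by ring) haB (by simpa using hbA)
  set z : ℂ := (b : ℂ) * exp (I * θ₁)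
  have hz : z ≠ 0 := by simp [z, hb.ne', exp_ne_zero]
  have hz_norm : ‖z‖ = b := norm_ofReal_mul_exp hb.le θ₁
  have hz_arg : |arg z| = θ₁ := by
    rw [arg_ofReal_mul_exp hb ⟨by linarith [Real.pi_pos, hθ₁.1], hθ₁.2⟩, abs_of_nonneg hθ₁.1]
  rcases hA with hleft | hright
  · refine factor (-θ₂) (θ₃ + θ₂) (by ring) (conj_ofReal_mul_exp a θ₂ ▸ hB _ haB) ?_
    refine hleft z hbA ?_
    rw [← hz_norm]
    exact norm_mul_exp_mem_arcMinus hz (by rw [hz_arg, abs_le]; constructor <;> linarith)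
  · refine factor θ₂ (θ₃ - θ₂) (by ring) haB ?_
    refine hright z hbA ?_
    rw [← hz_norm]
    exact norm_mul_exp_mem_arcPlus (by rw [hz_arg, abs_le]; constructor <;> linarith)

section ScaledGraph

variable {H : Type*} [NormedAddCommGroup H] [InnerProductSpace ℝ H]

lemma angle_add_angle_add_angle_le_two_pi (x y z : H) :
    angle x y + angle y z + angle x z ≤ 2 * π := by
  have h := angle_le_angle_add_angle x (-y) z
  rw [angle_neg_right, angle_neg_left] at h
  linarith

lemma srgPoint_eq_ofReal_mul_exp_angle (du dy : H) :
    srgPoint du dy = ((‖dy‖ / ‖du‖ : ℝ) : ℂ) * exp (I * angle du dy) := rfl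

@[simp]
lemma srgPoint_zero_right (du : H) : srgPoint du 0 = 0 := by
  simp [srgPoint]

lemma srgPoint_mem_mul {A B : Set ℂ} (hA : ∀ w ∈ A, conj w ∈ A) (hB : ∀ w ∈ B, conj w ∈ B)
    (harc : ArcProperty A ∨ ArcProperty B) {du dy dz : H} (hdy : dy ≠ 0)
    (hyA : srgPoint du dy ∈ A) (hzB : srgPoint dy dz ∈ B) :
    srgPoint du dz ∈ B * A := by
  have hratio : ‖dz‖ / ‖du‖ = (‖dz‖ / ‖dy‖) * (‖dy‖ / ‖du‖) :=
    (div_mul_div_cancel₀ (norm_ne_zero_iff.2 hdy)).symm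
  have h₃ := angle_le_angle_add_angle du dy dz
  have h₁ := angle_le_angle_add_angle du dz dy
  have h₂ := angle_le_angle_add_angle dy du dz
  have hsum := angle_add_angle_add_angle_le_two_pi du dy dz
  rw [angle_comm dz dy] at h₁
  rw [angle_comm dy du] at h₂
  rw [srgPoint_eq_ofReal_mul_exp_angle] at hyA hzB ⊢
  rw [hratio]
  rcases harc with harc | harc
  · exact harc.ofReal_mul_exp_mem_mul hB (by positivity) ⟨angle_nonneg _ _, angle_le_pi _ _⟩
      hyA hzB h₃ (by linarith) (by linarith) hsum
  · rw [mul_comm (‖dz‖ / ‖dy‖), mul_comm B]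
    exact harc.ofReal_mul_exp_mem_mul hA (by positivity) ⟨angle_nonneg _ _, angle_le_pi _ _⟩
      hzB hyA (by linarith) (by linarith) (by linarith) (by linarith)

lemma srgPoint_mem_SG {R : H → H} {U : Set H} {us u : H} (hu : u ∈ U) (hne : u ≠ us) :
    srgPoint (u - us) (R u - R us) ∈ SG R U us :=
  ⟨u, hu, hne, Or.inl rfl⟩

lemma conj_mem_SG {R : H → H} {U : Set H} {us : H} {z : ℂ} (hz : z ∈ SG R U us) :
    conj z ∈ SG R U us := by
  obtain ⟨u, hu, hne, rfl | rfl⟩ := hz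
  · exact ⟨u, hu, hne, Or.inr rfl⟩
  · exact ⟨u, hu, hne, Or.inl (Complex.conj_conj _)⟩

end ScaledGraph

lemma conj_mem_mul {A B : Set ℂ} (hA : ∀ w ∈ A, conj w ∈ A) (hB : ∀ w ∈ B, conj w ∈ B)
    {z : ℂ} (hz : z ∈ A * B) : conj z ∈ A * B := by
  obtain ⟨x, hx, y, hy, rfl⟩ := hz
  exact ⟨conj x, hA x hx, conj y, hB y hy, (map_mul conj x y).symm⟩

theorem stmt9_general {H : Type*} [NormedAddCommGroup H] [InnerProductSpace ℝ H]
    (us : H) (U Y : Set H)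
    (R T : H → H) (hmaps : Set.MapsTo R U Y) (hYne : (Y \ {R us}).Nonempty)
    (harc : ArcProperty (SG R U us) ∨ ArcProperty (SG T Y (R us))) :
    SG (T ∘ R) U us ⊆ SG T Y (R us) * SG R U us := by
  have hconjR : ∀ w ∈ SG R U us, conj w ∈ SG R U us := fun _ => conj_mem_SG
  have hconjT : ∀ w ∈ SG T Y (R us), conj w ∈ SG T Y (R us) := fun _ => conj_mem_SG
  rintro z ⟨u, hu, hne, hz⟩
  have hmem : srgPoint (u - us) (T (R u) - T (R us)) ∈ SG T Y (R us) * SG R U us := by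
    by_cases hRu : R u = R us
    · obtain ⟨y, hy, hyne⟩ := hYne
      have hzero : (0 : ℂ) ∈ SG R U us := by
        simpa [hRu] using srgPoint_mem_SG (R := R) hu hne
      simpa [hRu] using Set.mul_mem_mul (srgPoint_mem_SG (R := T) hy hyne) hzero
    · exact srgPoint_mem_mul hconjR hconjT harc (sub_ne_zero.2 hRu)
        (srgPoint_mem_SG hu hne) (srgPoint_mem_SG (hmaps hu) hRu)
  rcases hz with rfl | rfl
  · exact hmem
  · exact conj_mem_mul hconjT hconjR hmem

/-- scaled-graph series rule. If `U` is nonempty with `u⋆ ∉ U`, `R(U) ⊆ Y`,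
`Y ∖ {Ru⋆}` is nonempty, and at least one of `SG_{U,u⋆}(R)`, `SG_{Y,y⋆}(T)` (with `y⋆ = Ru⋆`)
satisfies an arc property, then `SG_{U,u⋆}(T∘R) ⊆ SG_{Y,y⋆}(T)·SG_{U,u⋆}(R)`. -/
theorem stmt9 {H : Type*} [NormedAddCommGroup H] [InnerProductSpace ℝ H]
    (us : H) (U Y : Set H) (hUne : U.Nonempty) (husU : us ∉ U)
    (R T : H → H) (hmaps : Set.MapsTo R U Y) (hYne : (Y \ {R us}).Nonempty)
    (harc : ArcProperty (SG R U us) ∨ ArcProperty (SG T Y (R us))) :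
    SG (T ∘ R) U us ⊆ SG T Y (R us) * SG R U us :=
  stmt9_general us U Y R T hmaps hYne harc
end

section
/- Let U and Y be Banach spaces, and H₁ : U → Y, H₂ : Y → U maps (not necessarily linear) with finite incremental gains Γ(H₁) < ∞, Γ(H₂) < ∞ satisfying Γ(H₁)·Γ(H₂) < 1. Then for every u ∈ U there exists a unique e ∈ U with e = u − H₂(H₁ e). Moreover, denoting by e(u) this solution and y(u) := H₁(e(u)), for all u₁, u₂ ∈ U one has ‖e(u₁) − e(u₂)‖ ≤ ‖u₁ − u₂‖ / (1 − Γ(H₁)Γ(H₂)) and ‖y(u₁) − y(u₂)‖ ≤ Γ(H₁)·‖u₁ − u₂‖ / (1 − Γ(H₁)Γ(H₂)); in particular the closed-loop map u ↦ y(u) has finite incremental gain. -/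
/-! For each `u` the map `e ↦ u - H₂ (H₁ e)` is a contraction with constant `Γ(H₂)·Γ(H₁) < 1`,
so Banach's fixed point theorem gives the unique solution `e(u)`. Two such maps for inputs
`u₁`, `u₂` differ everywhere by exactly `‖u₁ - u₂‖`, and a contraction's fixed point moves by at
most that displacement divided by `1 - K`; composing with `H₁` multiplies the bound by `Γ(H₁)`. -/

open scoped ENNReal

/-- The incremental gain (Lipschitz constant) of a map between normed spaces:
`Γ(R) = sup_{u₁ ≠ u₂} ‖Ru₁ − Ru₂‖/‖u₁ − u₂‖`, valued in `[0,∞]` (the terms with `u₁ = u₂`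
contribute `0/0 = 0` and do not affect the supremum). -/
noncomputable def incGain {U Y : Type*} [NormedAddCommGroup U] [NormedAddCommGroup Y]
    (R : U → Y) : ℝ≥0∞ :=
  ⨆ u₁ : U, ⨆ u₂ : U, edist (R u₁) (R u₂) / edist u₁ u₂

open scoped NNReal

section IncGain

variable {U Y : Type*} [NormedAddCommGroup U] [NormedAddCommGroup Y]

theorem edist_le_incGain_mul (R : U → Y) (a b : U) :
    edist (R a) (R b) ≤ incGain R * edist a b := by
  rcases eq_or_ne a b with rfl | hab
  · simp
  · have hquot : edist (R a) (R b) / edist a b ≤ incGain R :=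
      le_iSup₂_of_le (f := fun u₁ u₂ => edist (R u₁) (R u₂) / edist u₁ u₂) a b le_rfl
    exact (ENNReal.div_le_iff (edist_pos.mpr hab).ne' (edist_ne_top a b)).mp hquot

theorem lipschitzWith_toNNReal_incGain {R : U → Y} (h : incGain R ≠ ⊤) :
    LipschitzWith (incGain R).toNNReal R := fun a b => by
  rw [ENNReal.coe_toNNReal h]
  exact edist_le_incGain_mul R a b

end IncGain

theorem LipschitzWith.const_sub {α U : Type*} [PseudoEMetricSpace α] [SeminormedAddCommGroup U]
    {K : ℝ≥0} {f : α → U} (hf : LipschitzWith K f) (u : U) :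
    LipschitzWith K (fun e => u - f e) := fun a b => by
  rw [edist_sub_left]
  exact hf a b

namespace ContractingWith

variable {U : Type*} [NormedAddCommGroup U] {K : ℝ≥0} {G : U → U}

theorem const_sub (hG : ContractingWith K G) (u : U) : ContractingWith K (fun e => u - G e) :=
  ⟨hG.1, hG.2.const_sub u⟩

variable [CompleteSpace U] (hG : ContractingWith K G)

noncomputable def feedbackSolution (u : U) : U :=
  (hG.const_sub u).fixedPoint _

theorem feedbackSolution_eq (u : U) :
    hG.feedbackSolution u = u - G (hG.feedbackSolution u) :=
  (hG.const_sub u).fixedPoint_isFixedPt.symm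

theorem eq_feedbackSolution {u e : U} (he : e = u - G e) : e = hG.feedbackSolution u :=
  (hG.const_sub u).fixedPoint_unique he.symm

theorem dist_feedbackSolution_le (u₁ u₂ : U) :
    dist (hG.feedbackSolution u₁) (hG.feedbackSolution u₂) ≤ dist u₁ u₂ / (1 - K) :=
  (hG.const_sub u₁).fixedPoint_lipschitz_in_map (hG.const_sub u₂)
    fun _ => (dist_sub_right u₁ u₂ _).le

end ContractingWith

theorem stmt12_general {U Y : Type*}
    [NormedAddCommGroup U] [CompleteSpace U]
    [NormedAddCommGroup Y]
    (H₁ : U → Y) (H₂ : Y → U)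
    (h1 : incGain H₁ < ⊤) (h2 : incGain H₂ < ⊤)
    (hsg : incGain H₁ * incGain H₂ < 1) :
    ∃ E : U → U,
      (∀ u, E u = u - H₂ (H₁ (E u))) ∧
      (∀ u e, e = u - H₂ (H₁ e) → e = E u) ∧
      (∀ u₁ u₂, ‖E u₁ - E u₂‖ ≤
        ‖u₁ - u₂‖ / (1 - (incGain H₁).toReal * (incGain H₂).toReal)) ∧
      (∀ u₁ u₂, ‖H₁ (E u₁) - H₁ (E u₂)‖ ≤
        (incGain H₁).toReal * ‖u₁ - u₂‖ / (1 - (incGain H₁).toReal * (incGain H₂).toReal)) := by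
  have hH₁ := lipschitzWith_toNNReal_incGain h1.ne
  have hH₂ := lipschitzWith_toNNReal_incGain h2.ne
  have hK : (incGain H₂).toNNReal * (incGain H₁).toNNReal < 1 := by
    rw [← ENNReal.toNNReal_mul, mul_comm]
    exact ENNReal.toNNReal_lt_of_lt_coe hsg
  have hG : ContractingWith _ (H₂ ∘ H₁) := ⟨hK, hH₂.comp hH₁⟩
  have hE : ∀ u₁ u₂, ‖hG.feedbackSolution u₁ - hG.feedbackSolution u₂‖ ≤
      ‖u₁ - u₂‖ / (1 - (incGain H₁).toReal * (incGain H₂).toReal) := fun u₁ u₂ => by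
    simpa [dist_eq_norm, mul_comm, ENNReal.coe_toNNReal_eq_toReal] using
      hG.dist_feedbackSolution_le u₁ u₂
  refine ⟨hG.feedbackSolution, hG.feedbackSolution_eq, fun _ _ => hG.eq_feedbackSolution,
    hE, fun u₁ u₂ => ?_⟩
  calc ‖H₁ (hG.feedbackSolution u₁) - H₁ (hG.feedbackSolution u₂)‖
      ≤ (incGain H₁).toReal * ‖hG.feedbackSolution u₁ - hG.feedbackSolution u₂‖ := by
        simpa [dist_eq_norm, ENNReal.coe_toNNReal_eq_toReal] using hH₁.dist_le_mul _ _
    _ ≤ _ := by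
        rw [mul_div_assoc]
        gcongr
        exact hE u₁ u₂

/-- incremental small-gain theorem on Banach spaces: if `H₁ : U → Y`,
`H₂ : Y → U` have finite incremental gains with `Γ(H₁)·Γ(H₂) < 1`, then for every `u ∈ U` the
equation `e = u − H₂(H₁ e)` has a unique solution `e = E u`, and the maps `u ↦ E u` and
`u ↦ H₁(E u)` satisfy the stated incremental bounds; in particular the closed-loop map
`u ↦ H₁(E u)` has finite incremental gain. -/
theorem stmt12 {U Y : Type*}
    [NormedAddCommGroup U] [NormedSpace ℝ U] [CompleteSpace U]
    [NormedAddCommGroup Y] [NormedSpace ℝ Y] [CompleteSpace Y]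
    (H₁ : U → Y) (H₂ : Y → U)
    (h1 : incGain H₁ < ⊤) (h2 : incGain H₂ < ⊤)
    (hsg : incGain H₁ * incGain H₂ < 1) :
    ∃ E : U → U,
      (∀ u, E u = u - H₂ (H₁ (E u))) ∧
      (∀ u e, e = u - H₂ (H₁ e) → e = E u) ∧
      (∀ u₁ u₂, ‖E u₁ - E u₂‖ ≤
        ‖u₁ - u₂‖ / (1 - (incGain H₁).toReal * (incGain H₂).toReal)) ∧
      (∀ u₁ u₂, ‖H₁ (E u₁) - H₁ (E u₂)‖ ≤
        (incGain H₁).toReal * ‖u₁ - u₂‖ / (1 - (incGain H₁).toReal * (incGain H₂).toReal)) :=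
  stmt12_general H₁ H₂ h1 h2 hsg
end

section
/- Let U and Y be Banach spaces, and H₁ : U → Y, H₂ : Y → U maps with finite incremental gains Γ(H₁) < ∞ and Γ(H₂) < ∞. Suppose there exists Γ̂ > 0 such that for every τ ∈ [0,1], all u₁, u₂ ∈ U, and all e₁, e₂ ∈ U satisfying eᵢ = uᵢ − τ·H₂(H₁ eᵢ) for i = 1,2, it holds that ‖H₁ e₁ − H₁ e₂‖ ≤ Γ̂·‖u₁ − u₂‖. Then for every τ ∈ [0,1] and every u ∈ U there exists a unique e ∈ U with e = u − τ·H₂(H₁ e), and the closed-loop map u ↦ H₁ e is Lipschitz continuous with Lipschitz constant at most Γ̂; in particular this holds for τ = 1. -/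
/-!
Homotopy argument: the solution map `E₀` at a parameter `τ₀` is Lipschitz with a constant
`L = 1 + Γ(H₂) Γ̂` that does not depend on `τ₀`, because `E₀ u = u - τ₀ H₂(H₁(E₀ u))` and
`H₁ ∘ E₀` is `Γ̂`-Lipschitz by assumption. For `τ` close to `τ₀` the equation at `τ` is then the
fixed-point equation of the contraction `e ↦ E₀ (u - (τ - τ₀) H₂(H₁ e))`, so solvability spreads
from `τ = 0` to all of `[0, 1]` in steps of a fixed length. Uniqueness and the Lipschitz bound
of the closed loop follow from the hypothesis applied at `τ` itself.
-/

open scoped ENNReal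

open scoped NNReal

theorem forall_mem_Icc_of_step {P : ℝ → Prop} {a b δ : ℝ} (hδ : 0 < δ) (ha : P a)
    (hstep : ∀ τ₀ τ, a ≤ τ₀ → τ₀ ≤ τ → τ ≤ b → τ ≤ τ₀ + δ → P τ₀ → P τ) :
    ∀ τ ∈ Set.Icc a b, P τ := by
  suffices h : ∀ n : ℕ, ∀ τ ∈ Set.Icc a b, τ ≤ a + n * δ → P τ by
    intro τ hτ
    obtain ⟨n, hn⟩ := exists_nat_ge ((τ - a) / δ)
    exact h n τ hτ (by rw [div_le_iff₀ hδ] at hn; linarith)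
  intro n
  induction n with
  | zero => exact fun τ hτ hτa => le_antisymm (by simpa using hτa) hτ.1 ▸ ha
  | succ n ih =>
    intro τ hτ hτn
    push_cast at hτn
    set τ₀ := max a (τ - δ)
    have hτ₀ : τ₀ ∈ Set.Icc a b :=
      ⟨le_max_left _ _, max_le (hτ.1.trans hτ.2) (by linarith [hτ.2])⟩
    have hτ₀n : τ₀ ≤ a + n * δ :=
      max_le (le_add_of_nonneg_right (by positivity)) (by linarith)
    exact hstep τ₀ τ hτ₀.1 (max_le hτ.1 (by linarith)) hτ.2
      (by linarith [le_max_right a (τ - δ)]) (ih τ₀ hτ₀ hτ₀n)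

section Solvability

variable {U : Type*} [NormedAddCommGroup U] [NormedSpace ℝ U]

def SolvableAt (G : U → U) (τ : ℝ) : Prop :=
  ∀ u, ∃ e, e = u - τ • G e

theorem solvableAt_zero (G : U → U) : SolvableAt G 0 :=
  fun u => ⟨u, by simp⟩

theorem lipschitzWith_of_eq_sub_smul {E g : U → U} {c : ℝ} {K : ℝ≥0}
    (hE : ∀ u, E u = u - c • g u) (hg : LipschitzWith K g) :
    LipschitzWith (1 + ‖c‖₊ * K) E := by
  rw [show E = fun u => u - c • g u from funext hE]
  exact LipschitzWith.id.sub ((lipschitzWith_smul c).comp hg)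

/-- With `v = u - (τ - τ₀) • G e`, the equation `e = E₀ v` reads `e = v - τ₀ • G e`,
i.e. `e = u - τ • G e`. -/
theorem solvableAt_of_lipschitzWith_solution [CompleteSpace U] {G E₀ : U → U} {K L : ℝ≥0}
    {τ₀ τ : ℝ} (hG : LipschitzWith K G) (hE₀ : ∀ u, E₀ u = u - τ₀ • G (E₀ u))
    (hE₀L : LipschitzWith L E₀) (hτ : L * (‖τ - τ₀‖₊ * K) < 1) :
    SolvableAt G τ := by
  intro u
  set Φ : U → U := fun e => E₀ (u - (τ - τ₀) • G e)
  have hΦ : ContractingWith (L * (‖τ - τ₀‖₊ * K)) Φ := by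
    refine ⟨hτ, hE₀L.comp ?_⟩
    simpa using (LipschitzWith.const u).sub ((lipschitzWith_smul (τ - τ₀)).comp hG)
  have : Nonempty U := ⟨0⟩
  set e := hΦ.fixedPoint Φ
  have he : E₀ (u - (τ - τ₀) • G e) = e := hΦ.fixedPoint_isFixedPt
  refine ⟨e, ?_⟩
  calc e = (u - (τ - τ₀) • G e) - τ₀ • G e := by
        conv_lhs => rw [← he, hE₀, he]
    _ = u - τ • G e := by rw [sub_smul]; abel

theorem SolvableAt.of_abs_sub_le [CompleteSpace U] {G : U → U} {K M δ : ℝ≥0} {τ₀ τ : ℝ}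
    (hs : SolvableAt G τ₀) (hG : LipschitzWith K G) (hτ₀ : |τ₀| ≤ 1)
    (hM : ∀ E : U → U, (∀ u, E u = u - τ₀ • G (E u)) → LipschitzWith M (G ∘ E))
    (hτ : |τ - τ₀| ≤ δ) (hδ : (1 + M) * K * δ < 1) :
    SolvableAt G τ := by
  choose E₀ hE₀ using hs
  have hτ₀' : ‖τ₀‖₊ ≤ 1 := by
    rw [← NNReal.coe_le_coe, coe_nnnorm, Real.norm_eq_abs, NNReal.coe_one]; exact hτ₀
  have hE₀L : LipschitzWith (1 + M) E₀ :=
    (lipschitzWith_of_eq_sub_smul hE₀ (hM E₀ hE₀)).weaken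
      (add_le_add_right (mul_le_of_le_one_left zero_le hτ₀') 1)
  have hτ' : ‖τ - τ₀‖₊ ≤ δ := by
    rw [← NNReal.coe_le_coe, coe_nnnorm, Real.norm_eq_abs]; exact hτ
  refine solvableAt_of_lipschitzWith_solution hG hE₀ hE₀L (lt_of_le_of_lt ?_ hδ)
  calc (1 + M) * (‖τ - τ₀‖₊ * K) ≤ (1 + M) * (δ * K) := by gcongr
    _ = (1 + M) * K * δ := by ring

end Solvability

theorem stmt13_general {U Y : Type*}
    [NormedAddCommGroup U] [NormedSpace ℝ U] [CompleteSpace U]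
    [NormedAddCommGroup Y] [NormedSpace ℝ Y] [CompleteSpace Y]
    (H₁ : U → Y) (H₂ : Y → U)
    (h1 : incGain H₁ < ⊤) (h2 : incGain H₂ < ⊤)
    (Γhat : ℝ)
    (hyp : ∀ τ ∈ Set.Icc (0 : ℝ) 1, ∀ u₁ u₂ e₁ e₂ : U,
      e₁ = u₁ - τ • H₂ (H₁ e₁) → e₂ = u₂ - τ • H₂ (H₁ e₂) →
      ‖H₁ e₁ - H₁ e₂‖ ≤ Γhat * ‖u₁ - u₂‖) :
    ∀ τ ∈ Set.Icc (0 : ℝ) 1, ∃ E : U → U,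
      (∀ u, E u = u - τ • H₂ (H₁ (E u))) ∧
      (∀ u e, e = u - τ • H₂ (H₁ e) → e = E u) ∧
      (∀ u₁ u₂, ‖H₁ (E u₁) - H₁ (E u₂)‖ ≤ Γhat * ‖u₁ - u₂‖) := by
  have hH₁ := lipschitzWith_toNNReal_incGain h1.ne
  have hH₂ := lipschitzWith_toNNReal_incGain h2.ne
  set Γ := Γhat.toNNReal
  have hclosed : ∀ τ ∈ Set.Icc (0 : ℝ) 1, ∀ E : U → U,
      (∀ u, E u = u - τ • H₂ (H₁ (E u))) → LipschitzWith Γ (H₁ ∘ E) :=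
    fun τ hτ E hE => LipschitzWith.of_dist_le_mul fun u₁ u₂ => by
      simpa only [dist_eq_norm, Function.comp_apply] using
        (hyp τ hτ u₁ u₂ _ _ (hE u₁) (hE u₂)).trans
          (mul_le_mul_of_nonneg_right (Real.le_coe_toNNReal Γhat) (norm_nonneg _))
  obtain ⟨δ, hδ, hLδ⟩ := exists_pos_mul_lt one_pos
    ((1 + (incGain H₂).toNNReal * Γ) * ((incGain H₂).toNNReal * (incGain H₁).toNNReal))
  have hsolv : ∀ τ ∈ Set.Icc (0 : ℝ) 1, SolvableAt (H₂ ∘ H₁) τ :=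
    forall_mem_Icc_of_step (NNReal.coe_pos.2 hδ) (solvableAt_zero _)
      fun τ₀ τ hτ₀ hτ₀τ hτ1 hτδ hs =>
        hs.of_abs_sub_le (δ := δ) (hH₂.comp hH₁) (abs_le.2 ⟨by linarith, by linarith⟩)
          (fun E hE => hH₂.comp (hclosed τ₀ ⟨hτ₀, hτ₀τ.trans hτ1⟩ E hE))
          (abs_le.2 ⟨by linarith, by linarith⟩) hLδ
  intro τ hτ
  choose E hE using hsolv τ hτ
  refine ⟨E, hE, fun u e he => ?_, fun u₁ u₂ => hyp τ hτ u₁ u₂ _ _ (hE u₁) (hE u₂)⟩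
  have hH₁e : H₁ e = H₁ (E u) := by
    simpa [sub_eq_zero] using hyp τ hτ u u e (E u) he (hE u)
  rw [he, hH₁e]
  exact (hE u).symm

/-- incremental homotopy theorem on Banach spaces: suppose `H₁ : U → Y` and
`H₂ : Y → U` have finite incremental gains and there is `Γ̂ > 0` such that for every `τ ∈ [0,1]`
any two solutions `e₁, e₂` of `eᵢ = uᵢ − τ·H₂(H₁ eᵢ)` satisfy `‖H₁e₁ − H₁e₂‖ ≤ Γ̂‖u₁ − u₂‖`.
Then for every `τ ∈ [0,1]` and every `u` the equation `e = u − τ·H₂(H₁ e)` has a unique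
solution `e = E u`, and the closed-loop map `u ↦ H₁(E u)` is Lipschitz with constant at most
`Γ̂`; in particular this holds for `τ = 1`. -/
theorem stmt13 {U Y : Type*}
    [NormedAddCommGroup U] [NormedSpace ℝ U] [CompleteSpace U]
    [NormedAddCommGroup Y] [NormedSpace ℝ Y] [CompleteSpace Y]
    (H₁ : U → Y) (H₂ : Y → U)
    (h1 : incGain H₁ < ⊤) (h2 : incGain H₂ < ⊤)
    (Γhat : ℝ) (hΓ : 0 < Γhat)
    (hyp : ∀ τ ∈ Set.Icc (0 : ℝ) 1, ∀ u₁ u₂ e₁ e₂ : U,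
      e₁ = u₁ - τ • H₂ (H₁ e₁) → e₂ = u₂ - τ • H₂ (H₁ e₂) →
      ‖H₁ e₁ - H₁ e₂‖ ≤ Γhat * ‖u₁ - u₂‖) :
    ∀ τ ∈ Set.Icc (0 : ℝ) 1, ∃ E : U → U,
      (∀ u, E u = u - τ • H₂ (H₁ (E u))) ∧
      (∀ u e, e = u - τ • H₂ (H₁ e) → e = E u) ∧
      (∀ u₁ u₂, ‖H₁ (E u₁) - H₁ (E u₂)‖ ≤ Γhat * ‖u₁ - u₂‖) :=
  stmt13_general H₁ H₂ h1 h2 Γhat hyp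
end
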